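/- Assume Λ_ℓ ≠ 2Λ_s. Let p : Φ̊ → Y be ℤ-linear with p(α) ∈ Λ_s for every α ∈ Φ̊_s, and let S be maximal among subsets T ⊆ Y such that: T is a union of cosets of the subgroup 2Λ_s with 2Λ_s ⊆ T, p(α) + T ⊆ Λ_ℓ for every α ∈ Φ̊_ℓ, and p(α) + T ≠ Λ_ℓ for every α ∈ Φ̊_ℓ. Then Ψ := {(α,λ) : α ∈ Φ̊_s, λ ∈ Λ_s} ∪ {(α, p(α)+s) : α ∈ Φ̊_ℓ, s ∈ S} is a maximal root subsystem of Φ. -/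

import Mathlib

open RealInnerProductSpace

noncomputable section

/-- The standard basis vector `e i` of `ℝ^n`. -/
def ee (n : ℕ) (i : Fin n) : EuclideanSpace ℝ (Fin n) := EuclideanSpace.single i 1

/-- The set `{±e_i : 1 ≤ i ≤ n}`. -/
def pmE (n : ℕ) : Set (EuclideanSpace ℝ (Fin n)) :=
  {v | ∃ i : Fin n, v = ee n i ∨ v = -ee n i}

/-- The set `{±e_i ± e_j : i ≠ j}`. -/
def pmEE (n : ℕ) : Set (EuclideanSpace ℝ (Fin n)) :=
  {v | ∃ i j : Fin n, i ≠ j ∧ ∃ ε δ : ℝ, (ε = 1 ∨ ε = -1) ∧ (δ = 1 ∨ δ = -1) ∧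
    v = ε • ee n i + δ • ee n j}

/-- The set `{±2e_i : 1 ≤ i ≤ n}`. -/
def pm2E (n : ℕ) : Set (EuclideanSpace ℝ (Fin n)) :=
  {v | ∃ i : Fin n, v = (2 : ℝ) • ee n i ∨ v = -((2 : ℝ) • ee n i)}

/-- The reflection `s_α(β) = β − (2⟨β,α⟩/⟨α,α⟩)α`. -/
def reflV {V : Type*} [NormedAddCommGroup V] [InnerProductSpace ℝ V] (α β : V) : V :=
  β - (2 * ⟪β, α⟫ / ⟪α, α⟫) • α

/-- A root subsystem of `Φ` (w.r.t. a given reflection map): a nonempty subset of `Φ`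
closed under the reflections in its own elements. -/
def IsRootSubsystem {X : Type*} (refl : X → X → X) (Φ Ψ : Set X) : Prop :=
  Ψ.Nonempty ∧ Ψ ⊆ Φ ∧ ∀ a ∈ Ψ, ∀ b ∈ Ψ, refl a b ∈ Ψ

/-- A maximal root subsystem of `Φ`: a proper root subsystem such that every root
subsystem `Ψ'` with `Ψ ⊆ Ψ' ≠ Φ` equals `Ψ`. -/
def IsMaximalRootSubsystem {X : Type*} (refl : X → X → X) (Φ Ψ : Set X) : Prop :=
  IsRootSubsystem refl Φ Ψ ∧ Ψ ≠ Φ ∧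
    ∀ Ψ' : Set X, IsRootSubsystem refl Φ Ψ' → Ψ ⊆ Ψ' → Ψ' ≠ Φ → Ψ' = Ψ

/-- The affine reflection `s_a(b) = b − (2⟨b₁,a₁⟩/⟨a₁,a₁⟩)·a` on `V × Y`. -/
def reflA {V Y : Type*} [NormedAddCommGroup V] [InnerProductSpace ℝ V]
    [AddCommGroup Y] [Module ℝ Y] (a b : V × Y) : V × Y :=
  b - (2 * ⟪b.1, a.1⟫ / ⟪a.1, a.1⟫) • a

/-- `p : Φ̊ → Y` is ℤ-linear: `p(s_α(β)) = p(β) − (2⟨β,α⟩/⟨α,α⟩)·p(α)` for `α, β ∈ Φ̊`. -/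
def IsZLin {V Y : Type*} [NormedAddCommGroup V] [InnerProductSpace ℝ V]
    [AddCommGroup Y] [Module ℝ Y] (Φ₀ : Set V) (p : V → Y) : Prop :=
  ∀ α ∈ Φ₀, ∀ β ∈ Φ₀, p (reflV α β) = p β - (2 * ⟪β, α⟫ / ⟪α, α⟫) • p α

/-- The property of the subsets `T ⊆ Y` among which `S` is maximal in STATEMENT 4:
`T` is a union of cosets of `2Λ_s` with `2Λ_s ⊆ T`, and `p(α) + T ⊆ Λ_ℓ` and
`p(α) + T ≠ Λ_ℓ` for every long root `α`. -/
def CGoodT (n : ℕ) {Y : Type*} [AddCommGroup Y]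
    (Λs : AddSubgroup Y) (Λℓ : Set Y) (p : EuclideanSpace ℝ (Fin n) → Y)
    (T : Set Y) : Prop :=
  (∀ x ∈ Λs, 2 • x ∈ T) ∧
  (∀ t ∈ T, ∀ x ∈ Λs, t + 2 • x ∈ T) ∧
  (∀ α ∈ pm2E n, ∀ t ∈ T, p α + t ∈ Λℓ) ∧
  (∀ α ∈ pm2E n, {y | ∃ t ∈ T, y = p α + t} ≠ Λℓ)

/-!
Every root of `C_n` lies in `ℤⁿ` together with its coroot `2α / ⟨α, α⟩`, and the long roots lie
in `2ℤⁿ`. So the Cartan integers `⟨β, α^∨⟩` are integers, even ones when `β` is long; and since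
the vectors of `ℤⁿ` of squared length 2 (of `2ℤⁿ` of squared length 4) are exactly the short
(long) roots, reflections preserve root lengths. A reflection in a root of `Ψ` therefore moves the
translation part `p(β) + s` of a long root by an element of `2Λ_s`, which `S` absorbs.

For maximality let `Ψ ⊆ Ψ' ≠ Φ` and `T = {t | (α, p(α) + t) ∈ Ψ'}`. By `ℤ`-linearity of `p`,
reflecting in the short roots `(β, p(β)) ∈ Ψ'` keeps `t`, and these reflections act transitively
on the long roots, so `T` does not depend on `α`; reflecting in `(β, -x)` and then in `(β, 0)`
adds `2x`, so `T + 2Λ_s ⊆ T`. If `p(α) + T = Λ_ℓ` for some `α`, then `Ψ' = Φ`, because `p` varies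
by `2Λ_s` over the long roots. Hence `T` satisfies the conditions on `S`, and the maximality of
`S` gives `T = S`, that is `Ψ' = Ψ`.
-/

section Reflection

variable {V : Type*} [NormedAddCommGroup V] [InnerProductSpace ℝ V]

lemma reflV_smul_right (α β : V) (c : ℝ) : reflV α (c • β) = c • reflV α β := by
  simp only [reflV, real_inner_smul_left, smul_sub, smul_smul]
  congr 2
  ring

lemma inner_reflV_self {α : V} (hα : ⟪α, α⟫ ≠ 0) (β : V) :
    ⟪reflV α β, reflV α β⟫ = ⟪β, β⟫ := by
  simp only [reflV, inner_sub_left, inner_sub_right, real_inner_smul_left,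
    real_inner_smul_right, real_inner_comm α β]
  field_simp
  ring

lemma inner_reflV_left {α : V} (hα : ⟪α, α⟫ ≠ 0) (β : V) :
    ⟪reflV α β, α⟫ = -⟪β, α⟫ := by
  simp only [reflV, inner_sub_left, real_inner_smul_left]
  field_simp
  ring

lemma reflV_reflV {α : V} (hα : ⟪α, α⟫ ≠ 0) (β : V) : reflV α (reflV α β) = β := by
  rw [reflV, inner_reflV_left hα, reflV]
  module

variable {Y : Type*} [AddCommGroup Y] [Module ℝ Y]

lemma reflA_mk (α β : V) (l μ : Y) :
    reflA (α, l) (β, μ) = (reflV α β, μ - (2 * ⟪β, α⟫ / ⟪α, α⟫) • l) := rfl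

lemma reflA_reflA_of_fst_eq {β : V} (hβ : ⟪β, β⟫ ≠ 0) (α : V) (l₁ l₂ μ : Y) :
    reflA (β, l₂) (reflA (β, l₁) (α, μ)) =
      (α, μ - (2 * ⟪α, β⟫ / ⟪β, β⟫) • (l₁ - l₂)) := by
  rw [reflA_mk, reflA_mk, reflV_reflV hβ, inner_reflV_left hβ]
  refine Prod.ext rfl ?_
  dsimp only
  module

lemma reflA_graph {Φ₀ : Set V} {p : V → Y} (hp : IsZLin Φ₀ p) {α β : V} (hα : α ∈ Φ₀)
    (hβ : β ∈ Φ₀) (t : Y) : reflA (α, p α) (β, p β + t) = (reflV α β, p (reflV α β) + t) := by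
  rw [reflA_mk, hp α hα β hβ]
  congr 1
  abel

end Reflection

section IntegerSquares

variable {ι : Type*} [Fintype ι] {z : ι → ℤ}

lemma eq_one_or_eq_neg_one_of_sum_sq_lt_four (h : ∑ i, z i ^ 2 < 4) {i : ι} (hi : z i ≠ 0) :
    z i = 1 ∨ z i = -1 := by
  have hle : z i ^ 2 ≤ ∑ j, z j ^ 2 :=
    Finset.single_le_sum (f := fun j ↦ z j ^ 2) (fun j _ ↦ sq_nonneg _) (Finset.mem_univ i)
  have hbound : -1 ≤ z i ∧ z i ≤ 1 := ⟨by nlinarith, by nlinarith⟩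
  omega

lemma sum_sq_eq_card_support (h : ∑ i, z i ^ 2 < 4) :
    ∑ i, z i ^ 2 = (Finset.univ.filter (z · ≠ 0)).card := by
  rw [← Finset.sum_boole]
  refine Finset.sum_congr rfl fun i _ ↦ ?_
  by_cases hi : z i = 0
  · simp [hi]
  · rcases eq_one_or_eq_neg_one_of_sum_sq_lt_four h hi with h1 | h1 <;> simp [h1]

end IntegerSquares

section RootsCn

def intLattice (n : ℕ) (m : ℤ) : AddSubgroup (EuclideanSpace ℝ (Fin n)) where
  carrier := {v | ∀ i, ∃ z : ℤ, v i = m * z}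
  add_mem' {v w} hv hw i := by
    obtain ⟨a, ha⟩ := hv i
    obtain ⟨b, hb⟩ := hw i
    exact ⟨a + b, by simp [ha, hb]; ring⟩
  zero_mem' _ := ⟨0, by simp⟩
  neg_mem' {v} hv i := by
    obtain ⟨a, ha⟩ := hv i
    exact ⟨-a, by simp [ha]⟩

variable {n : ℕ}

lemma inner_eq_sum_mul (v w : EuclideanSpace ℝ (Fin n)) : ⟪v, w⟫ = ∑ i, v i * w i := by
  simp [PiLp.inner_apply, mul_comm]

lemma ee_apply (i k : Fin n) : ee n i k = if k = i then 1 else 0 := by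
  simp [ee]

lemma inner_mem_of_mem_intLattice {a b : ℤ} {v w : EuclideanSpace ℝ (Fin n)}
    (hv : v ∈ intLattice n a) (hw : w ∈ intLattice n b) : ∃ z : ℤ, ⟪v, w⟫ = a * b * z := by
  choose x hx using hv
  choose y hy using hw
  refine ⟨∑ i, x i * y i, ?_⟩
  simp only [inner_eq_sum_mul, hx, hy, Int.cast_sum, Int.cast_mul, Finset.mul_sum]
  exact Finset.sum_congr rfl fun i _ ↦ by ring

lemma smul_mem_intLattice {v : EuclideanSpace ℝ (Fin n)} (hv : v ∈ intLattice n 1)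
    (m c : ℤ) : ((m : ℝ) * c) • v ∈ intLattice n m := by
  intro i
  obtain ⟨x, hx⟩ := hv i
  exact ⟨c * x, by simp [hx]; ring⟩

lemma intLattice_two_le_one : intLattice n 2 ≤ intLattice n 1 := by
  intro v hv i
  obtain ⟨x, hx⟩ := hv i
  exact ⟨2 * x, by simp [hx]⟩

lemma ee_mem_intLattice (i : Fin n) : ee n i ∈ intLattice n 1 :=
  fun k ↦ ⟨if k = i then 1 else 0, by simp [ee_apply]⟩

lemma sign_smul_mem_intLattice {m : ℤ} {ε : ℝ} (hε : ε = 1 ∨ ε = -1) {v : EuclideanSpace ℝ (Fin n)}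
    (hv : v ∈ intLattice n m) : ε • v ∈ intLattice n m := by
  rcases hε with rfl | rfl
  · simpa using hv
  · simpa using neg_mem hv

lemma inner_ee (i j : Fin n) : ⟪ee n i, ee n j⟫ = if i = j then 1 else 0 := by
  simp [inner_eq_sum_mul, ee_apply, eq_comm]

lemma inner_self_sign_smul_ee_add {i j : Fin n} (hij : i ≠ j) {ε δ : ℝ} (hε : ε = 1 ∨ ε = -1)
    (hδ : δ = 1 ∨ δ = -1) : ⟪ε • ee n i + δ • ee n j, ε • ee n i + δ • ee n j⟫ = 2 := by
  simp only [inner_add_left, inner_add_right, real_inner_smul_left, real_inner_smul_right,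
    inner_ee, hij, hij.symm, if_true, if_false]
  rcases hε with rfl | rfl <;> rcases hδ with rfl | rfl <;> norm_num

lemma inner_self_eq_sq_mul_sum_sq {m : ℤ} {z : Fin n → ℤ} {v : EuclideanSpace ℝ (Fin n)}
    (hz : ∀ k, v k = m * z k) : ⟪v, v⟫ = m ^ 2 * ((∑ k, z k ^ 2 : ℤ) : ℝ) := by
  rw [inner_eq_sum_mul, Int.cast_sum, Finset.mul_sum]
  exact Finset.sum_congr rfl fun k _ ↦ by rw [hz]; push_cast; ring

lemma mem_pmEE_of_mem_intLattice {v : EuclideanSpace ℝ (Fin n)} (hv : v ∈ intLattice n 1)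
    (hvv : ⟪v, v⟫ = 2) : v ∈ pmEE n := by
  choose z hz using hv
  have hsum : ∑ k, z k ^ 2 = 2 := by
    rw [inner_self_eq_sq_mul_sum_sq hz, Int.cast_one] at hvv
    exact_mod_cast (by linarith : ((∑ k, z k ^ 2 : ℤ) : ℝ) = 2)
  have hlt : ∑ k, z k ^ 2 < 4 := by linarith
  have hcard := sum_sq_eq_card_support hlt
  obtain ⟨i, j, hij, hsupp⟩ :=
    (Finset.card_eq_two (s := Finset.univ.filter (z · ≠ 0))).mp (by omega)
  have hsupp' : ∀ k, z k ≠ 0 ↔ k = i ∨ k = j := fun k ↦ by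
    simpa using congrArg (k ∈ ·) hsupp
  have hsign : ∀ k, z k ≠ 0 → ((z k : ℝ) = 1 ∨ (z k : ℝ) = -1) := fun k hk ↦ by
    rcases eq_one_or_eq_neg_one_of_sum_sq_lt_four hlt hk with h | h <;> simp [h]
  refine ⟨i, j, hij, z i, z j, hsign i ((hsupp' i).mpr (Or.inl rfl)),
    hsign j ((hsupp' j).mpr (Or.inr rfl)), ?_⟩
  ext k
  by_cases hk : k = i ∨ k = j
  · rcases hk with rfl | rfl <;> simp [hz, ee_apply, hij, hij.symm]
  · have hzk : z k = 0 := not_not.mp fun h ↦ hk ((hsupp' k).mp h)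
    simp only [not_or] at hk
    simp [hz, ee_apply, hk, hzk]

lemma mem_pm2E_of_mem_intLattice {v : EuclideanSpace ℝ (Fin n)} (hv : v ∈ intLattice n 2)
    (hvv : ⟪v, v⟫ = 4) : v ∈ pm2E n := by
  choose z hz using hv
  have hsum : ∑ k, z k ^ 2 = 1 := by
    rw [inner_self_eq_sq_mul_sum_sq hz, Int.cast_ofNat] at hvv
    exact_mod_cast (by linarith : ((∑ k, z k ^ 2 : ℤ) : ℝ) = 1)
  have hlt : ∑ k, z k ^ 2 < 4 := by linarith
  have hcard := sum_sq_eq_card_support hlt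
  obtain ⟨i, hsupp⟩ := (Finset.card_eq_one (s := Finset.univ.filter (z · ≠ 0))).mp (by omega)
  have hsupp' : ∀ k, z k ≠ 0 ↔ k = i := fun k ↦ by
    simpa using congrArg (k ∈ ·) hsupp
  have hv : v = (2 * z i : ℝ) • ee n i := by
    ext k
    by_cases hk : k = i
    · subst hk; simp [hz, ee_apply]
    · have hzk : z k = 0 := not_not.mp fun h ↦ hk ((hsupp' k).mp h)
      simp [hz, ee_apply, hk, hzk]
  refine ⟨i, ?_⟩
  rcases eq_one_or_eq_neg_one_of_sum_sq_lt_four hlt ((hsupp' i).mpr rfl) with h | h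
  · exact Or.inl (by simp [hv, h])
  · exact Or.inr (by simp [hv, h])

lemma mem_pmEE_iff {v : EuclideanSpace ℝ (Fin n)} :
    v ∈ pmEE n ↔ v ∈ intLattice n 1 ∧ ⟪v, v⟫ = 2 := by
  refine ⟨?_, fun h ↦ mem_pmEE_of_mem_intLattice h.1 h.2⟩
  rintro ⟨i, j, hij, ε, δ, hε, hδ, rfl⟩
  exact ⟨add_mem (sign_smul_mem_intLattice hε (ee_mem_intLattice i))
    (sign_smul_mem_intLattice hδ (ee_mem_intLattice j)), inner_self_sign_smul_ee_add hij hε hδ⟩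

lemma two_smul_ee_mem_intLattice (i : Fin n) : (2 : ℝ) • ee n i ∈ intLattice n 2 :=
  fun k ↦ ⟨if k = i then 1 else 0, by simp [ee_apply]⟩

lemma mem_pm2E_iff {v : EuclideanSpace ℝ (Fin n)} :
    v ∈ pm2E n ↔ v ∈ intLattice n 2 ∧ ⟪v, v⟫ = 4 := by
  refine ⟨?_, fun h ↦ mem_pm2E_of_mem_intLattice h.1 h.2⟩
  have h4 : ∀ i, ⟪(2 : ℝ) • ee n i, (2 : ℝ) • ee n i⟫ = 4 := fun i ↦ by
    rw [real_inner_smul_left, real_inner_smul_right, inner_ee, if_pos rfl]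
    norm_num
  rintro ⟨i, rfl | rfl⟩
  · exact ⟨two_smul_ee_mem_intLattice i, h4 i⟩
  · exact ⟨neg_mem (two_smul_ee_mem_intLattice i), by rw [inner_neg_neg, h4]⟩

lemma mem_intLattice_one_of_mem {α : EuclideanSpace ℝ (Fin n)} (hα : α ∈ pmEE n ∪ pm2E n) :
    α ∈ intLattice n 1 := by
  rcases hα with h | h
  · exact (mem_pmEE_iff.mp h).1
  · exact intLattice_two_le_one (mem_pm2E_iff.mp h).1

lemma inner_self_ne_zero_of_mem {α : EuclideanSpace ℝ (Fin n)} (hα : α ∈ pmEE n ∪ pm2E n) :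
    ⟪α, α⟫ ≠ 0 := by
  rcases hα with h | h
  · rw [(mem_pmEE_iff.mp h).2]; norm_num
  · rw [(mem_pm2E_iff.mp h).2]; norm_num

lemma coroot_mem_intLattice {α : EuclideanSpace ℝ (Fin n)} (hα : α ∈ pmEE n ∪ pm2E n) :
    (2 / ⟪α, α⟫) • α ∈ intLattice n 1 := by
  rcases hα with h | h
  · obtain ⟨hα, hαα⟩ := mem_pmEE_iff.mp h
    rw [hαα, div_self two_ne_zero, one_smul]
    exact hα
  · obtain ⟨hα, hαα⟩ := mem_pm2E_iff.mp h
    intro i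
    obtain ⟨z, hz⟩ := hα i
    refine ⟨z, ?_⟩
    rw [hαα, PiLp.smul_apply, hz]
    push_cast
    ring

lemma exists_cartan_eq {α β : EuclideanSpace ℝ (Fin n)} (hα : α ∈ pmEE n ∪ pm2E n) {m : ℤ}
    (hβ : β ∈ intLattice n m) : ∃ c : ℤ, 2 * ⟪β, α⟫ / ⟪α, α⟫ = m * c := by
  obtain ⟨c, hc⟩ := inner_mem_of_mem_intLattice hβ (coroot_mem_intLattice hα)
  refine ⟨c, ?_⟩
  rw [real_inner_smul_right, Int.cast_one, mul_one] at hc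
  rw [mul_div_right_comm, ← hc]

lemma reflV_mem_intLattice {α β : EuclideanSpace ℝ (Fin n)} (hα : α ∈ pmEE n ∪ pm2E n) {m : ℤ}
    (hβ : β ∈ intLattice n m) : reflV α β ∈ intLattice n m := by
  obtain ⟨c, hc⟩ := exists_cartan_eq hα hβ
  rw [reflV, hc]
  exact sub_mem hβ (smul_mem_intLattice (mem_intLattice_one_of_mem hα) m c)

lemma reflV_mem_pmEE {α β : EuclideanSpace ℝ (Fin n)} (hα : α ∈ pmEE n ∪ pm2E n)
    (hβ : β ∈ pmEE n) : reflV α β ∈ pmEE n := by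
  rw [mem_pmEE_iff] at hβ ⊢
  exact ⟨reflV_mem_intLattice hα hβ.1,
    by rw [inner_reflV_self (inner_self_ne_zero_of_mem hα), hβ.2]⟩

lemma reflV_mem_pm2E {α β : EuclideanSpace ℝ (Fin n)} (hα : α ∈ pmEE n ∪ pm2E n)
    (hβ : β ∈ pm2E n) : reflV α β ∈ pm2E n := by
  rw [mem_pm2E_iff] at hβ ⊢
  exact ⟨reflV_mem_intLattice hα hβ.1,
    by rw [inner_reflV_self (inner_self_ne_zero_of_mem hα), hβ.2]⟩

lemma pmEE_disjoint_pm2E : Disjoint (pmEE n) (pm2E n) := by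
  refine Set.disjoint_left.mpr fun v hs hl ↦ ?_
  have := (mem_pmEE_iff.mp hs).2.symm.trans (mem_pm2E_iff.mp hl).2
  norm_num at this

lemma cartan_two_ee_ee_add {i k : Fin n} (hik : i ≠ k) {δ : ℝ} (hδ : δ = 1 ∨ δ = -1) :
    2 * ⟪(2 : ℝ) • ee n i, ee n i + δ • ee n k⟫ /
      ⟪ee n i + δ • ee n k, ee n i + δ • ee n k⟫ = 2 := by
  have hnorm := inner_self_sign_smul_ee_add hik (Or.inl rfl) hδ
  rw [one_smul] at hnorm
  rw [hnorm, real_inner_smul_left, inner_add_right, real_inner_smul_right, inner_ee, inner_ee,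
    if_pos rfl, if_neg hik]
  ring

lemma reflV_ee_add_sign_smul {i k : Fin n} (hik : i ≠ k) {δ : ℝ} (hδ : δ = 1 ∨ δ = -1)
    (ε : ℝ) :
    reflV (ee n i + δ • ee n k) (ε • (2 : ℝ) • ee n i) = (-(ε * δ)) • (2 : ℝ) • ee n k := by
  rw [reflV_smul_right, reflV, cartan_two_ee_ee_add hik hδ]
  module

lemma exists_sign_smul_of_mem_pm2E {v : EuclideanSpace ℝ (Fin n)} (hv : v ∈ pm2E n) :
    ∃ i, ∃ ε : ℝ, (ε = 1 ∨ ε = -1) ∧ v = ε • (2 : ℝ) • ee n i := by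
  obtain ⟨i, rfl | rfl⟩ := hv
  · exact ⟨i, 1, Or.inl rfl, (one_smul ..).symm⟩
  · exact ⟨i, -1, Or.inr rfl, (neg_one_smul ..).symm⟩

lemma pm2E_subset_of_reflV_mem (hn : 2 ≤ n) {Z : Set (EuclideanSpace ℝ (Fin n))}
    (hZ : ∀ β ∈ pmEE n, ∀ α ∈ Z, reflV β α ∈ Z) {α : EuclideanSpace ℝ (Fin n)}
    (hα : α ∈ pm2E n) (hαZ : α ∈ Z) : pm2E n ⊆ Z := by
  have step : ∀ i, ∀ ε : ℝ, (ε = 1 ∨ ε = -1) → ε • (2 : ℝ) • ee n i ∈ Z →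
      ∀ k ≠ i, ∀ s : ℝ, (s = 1 ∨ s = -1) → s • (2 : ℝ) • ee n k ∈ Z := by
    intro i ε hε hi k hk s hs
    have hδ : -(ε * s) = 1 ∨ -(ε * s) = -1 := by
      rcases hε with rfl | rfl <;> rcases hs with rfl | rfl <;> norm_num
    have hβ : ee n i + (-(ε * s)) • ee n k ∈ pmEE n :=
      ⟨i, k, hk.symm, 1, _, Or.inl rfl, hδ, by rw [one_smul]⟩
    have := hZ _ hβ _ hi
    rwa [reflV_ee_add_sign_smul hk.symm hδ,
      show -(ε * -(ε * s)) = s by rcases hε with rfl | rfl <;> ring] at this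
  have : Nontrivial (Fin n) := Fin.nontrivial_iff_two_le.mpr hn
  obtain ⟨i, ε, hε, rfl⟩ := exists_sign_smul_of_mem_pm2E hα
  intro v hv
  obtain ⟨k, s, hs, rfl⟩ := exists_sign_smul_of_mem_pm2E hv
  by_cases hki : k = i
  · obtain ⟨j, hji⟩ := exists_ne i
    have hj := step i ε hε hαZ j hji 1 (Or.inl rfl)
    exact step j 1 (Or.inl rfl) hj k (hki ▸ hji.symm) s hs
  · exact step i ε hε hαZ k hki s hs

end RootsCn

section AffineRoots

variable {Y : Type*} [AddCommGroup Y]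

def affineShortRoots (n : ℕ) (Λs : AddSubgroup Y) : Set (EuclideanSpace ℝ (Fin n) × Y) :=
  {x | x.1 ∈ pmEE n ∧ x.2 ∈ Λs}

def affineLongRoots (n : ℕ) (Λℓ : Set Y) : Set (EuclideanSpace ℝ (Fin n) × Y) :=
  {x | x.1 ∈ pm2E n ∧ x.2 ∈ Λℓ}

def liftedLongRoots (n : ℕ) (p : EuclideanSpace ℝ (Fin n) → Y) (S : Set Y) :
    Set (EuclideanSpace ℝ (Fin n) × Y) :=
  {x | ∃ α ∈ pm2E n, ∃ s ∈ S, x = (α, p α + s)}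

variable {n : ℕ} {Λs : AddSubgroup Y} {Λℓ : Set Y} {p : EuclideanSpace ℝ (Fin n) → Y} {S : Set Y}
  {Ψ' : Set (EuclideanSpace ℝ (Fin n) × Y)}

lemma CGoodT.zero_mem (hS : CGoodT n Λs Λℓ p S) : (0 : Y) ∈ S := by
  simpa using hS.1 0 Λs.zero_mem

lemma CGoodT.apply_mem_of_mem_pm2E (hS : CGoodT n Λs Λℓ p S) (hℓs : Λℓ ⊆ Λs)
    {α : EuclideanSpace ℝ (Fin n)} (hα : α ∈ pm2E n) : p α ∈ Λs :=
  hℓs (by simpa using hS.2.2.1 α hα 0 hS.zero_mem)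

lemma affineShortRoots_union_liftedLongRoots_ne (hn : 0 < n) (hS : CGoodT n Λs Λℓ p S) :
    affineShortRoots n Λs ∪ liftedLongRoots n p S ≠
      affineShortRoots n Λs ∪ affineLongRoots n Λℓ := by
  intro h
  set α : EuclideanSpace ℝ (Fin n) := (2 : ℝ) • ee n ⟨0, hn⟩
  have hα : α ∈ pm2E n := ⟨_, Or.inl rfl⟩
  refine hS.2.2.2 α hα (Set.Subset.antisymm ?_ fun μ hμ ↦ ?_)
  · rintro _ ⟨t, ht, rfl⟩
    exact hS.2.2.1 α hα t ht
  · have hαμ : (α, μ) ∈ affineShortRoots n Λs ∪ liftedLongRoots n p S := h ▸ Or.inr ⟨hα, hμ⟩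
    rcases hαμ with ⟨hα', -⟩ | ⟨_, -, s, hs, ⟨⟩⟩
    · exact (Set.disjoint_left.mp pmEE_disjoint_pm2E hα' hα).elim
    · exact ⟨s, hs, rfl⟩

variable [Module ℝ Y]

lemma intCast_mul_smul (m c : ℤ) (y : Y) : ((m : ℝ) * c) • y = m • c • y := by
  rw [mul_smul, Int.cast_smul_eq_zsmul, Int.cast_smul_eq_zsmul]

lemma reflA_mem_affineShortRoots {α β : EuclideanSpace ℝ (Fin n)} (hα : α ∈ pmEE n ∪ pm2E n)
    {l μ : Y} (hl : l ∈ Λs) (hβμ : (β, μ) ∈ affineShortRoots n Λs) :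
    reflA (α, l) (β, μ) ∈ affineShortRoots n Λs := by
  obtain ⟨hβ, hμ⟩ := hβμ
  obtain ⟨c, hc⟩ := exists_cartan_eq hα (mem_pmEE_iff.mp hβ).1
  rw [reflA_mk, hc, intCast_mul_smul, one_smul]
  exact ⟨reflV_mem_pmEE hα hβ, sub_mem hμ (zsmul_mem hl c)⟩

lemma reflA_mem_liftedLongRoots (hlin : IsZLin (pmEE n ∪ pm2E n) p)
    (hS : ∀ s ∈ S, ∀ x ∈ Λs, s + 2 • x ∈ S) {α : EuclideanSpace ℝ (Fin n)}
    (hα : α ∈ pmEE n ∪ pm2E n) (hpα : p α ∈ Λs) {l : Y} (hl : l ∈ Λs)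
    {b : EuclideanSpace ℝ (Fin n) × Y} (hb : b ∈ liftedLongRoots n p S) : reflA (α, l) b ∈ liftedLongRoots n p S := by
  obtain ⟨β, hβ, s, hs, rfl⟩ := hb
  obtain ⟨c, hc⟩ := exists_cartan_eq hα (mem_pm2E_iff.mp hβ).1
  refine ⟨reflV α β, reflV_mem_pm2E hα hβ, s + 2 • c • (p α - l),
    hS s hs _ (zsmul_mem (sub_mem hpα hl) c), ?_⟩
  rw [reflA_mk, hlin α hα β (Or.inr hβ), hc, intCast_mul_smul, intCast_mul_smul,
    ofNat_smul_eq_nsmul ℤ 2, ofNat_smul_eq_nsmul ℤ 2]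
  congr 1
  rw [smul_sub, smul_sub]
  abel

lemma isRootSubsystem_affineShortRoots_union_liftedLongRoots (hn : 0 < n)
    (hℓs : Λℓ ⊆ Λs) (hlin : IsZLin (pmEE n ∪ pm2E n) p) (hps : ∀ α ∈ pmEE n, p α ∈ Λs)
    (hS : CGoodT n Λs Λℓ p S) :
    IsRootSubsystem reflA (affineShortRoots n Λs ∪ affineLongRoots n Λℓ)
      (affineShortRoots n Λs ∪ liftedLongRoots n p S) := by
  refine ⟨⟨_, Or.inr ⟨(2 : ℝ) • ee n ⟨0, hn⟩, ⟨_, Or.inl rfl⟩, 0, hS.zero_mem, rfl⟩⟩, ?_, ?_⟩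
  · rintro x (hx | ⟨α, hα, s, hs, rfl⟩)
    · exact Or.inl hx
    · exact Or.inr ⟨hα, hS.2.2.1 α hα s hs⟩
  · rintro ⟨α, l⟩ ha b hb
    obtain ⟨hα, hl, hpα⟩ : α ∈ pmEE n ∪ pm2E n ∧ l ∈ Λs ∧ p α ∈ Λs := by
      rcases ha with ⟨hα, hl⟩ | ⟨α, hα, s, hs, ⟨⟩⟩
      · exact ⟨Or.inl hα, hl, hps α hα⟩
      · exact ⟨Or.inr hα, hℓs (hS.2.2.1 α hα s hs), hS.apply_mem_of_mem_pm2E hℓs hα⟩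
    rcases hb with hb | hb
    · exact Or.inl (reflA_mem_affineShortRoots hα hl hb)
    · exact Or.inr (reflA_mem_liftedLongRoots hlin hS.2.1 hα hpα hl hb)

lemma exists_eq_add_two_smul (hn : 2 ≤ n) (hlin : IsZLin (pmEE n ∪ pm2E n) p)
    (hps : ∀ α ∈ pmEE n, p α ∈ Λs) {α α' : EuclideanSpace ℝ (Fin n)} (hα : α ∈ pm2E n)
    (hα' : α' ∈ pm2E n) : ∃ x ∈ Λs, p α' = p α + 2 • x := by
  refine (pm2E_subset_of_reflV_mem hn (Z := {γ | γ ∈ pm2E n ∧ ∃ x ∈ Λs, p γ = p α + 2 • x})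
    ?_ hα ⟨hα, 0, Λs.zero_mem, by simp⟩ hα').2
  rintro β hβ γ ⟨hγ, x, hx, hpγ⟩
  obtain ⟨c, hc⟩ := exists_cartan_eq (Or.inl hβ) (mem_pm2E_iff.mp hγ).1
  refine ⟨reflV_mem_pm2E (Or.inl hβ) hγ, x - c • p β, sub_mem hx (zsmul_mem (hps β hβ) c), ?_⟩
  rw [hlin β (Or.inl hβ) γ (Or.inr hγ), hc, intCast_mul_smul, hpγ, ofNat_smul_eq_nsmul ℤ 2,
    smul_sub, add_sub_assoc]

lemma mem_of_mem_of_mem_pm2E (hn : 2 ≤ n) (hlin : IsZLin (pmEE n ∪ pm2E n) p)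
    (hps : ∀ α ∈ pmEE n, p α ∈ Λs) (hcl : ∀ a ∈ Ψ', ∀ b ∈ Ψ', reflA a b ∈ Ψ')
    (hshort : affineShortRoots n Λs ⊆ Ψ') {α α' : EuclideanSpace ℝ (Fin n)} (hα : α ∈ pm2E n)
    (hα' : α' ∈ pm2E n) {t : Y} (ht : (α, p α + t) ∈ Ψ') : (α', p α' + t) ∈ Ψ' := by
  refine (pm2E_subset_of_reflV_mem hn (Z := {γ | γ ∈ pm2E n ∧ (γ, p γ + t) ∈ Ψ'})
    ?_ hα ⟨hα, ht⟩ hα').2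
  rintro β hβ γ ⟨hγ, hγΨ⟩
  refine ⟨reflV_mem_pm2E (Or.inl hβ) hγ, ?_⟩
  rw [← reflA_graph hlin (Or.inl hβ) (Or.inr hγ)]
  exact hcl _ (hshort ⟨hβ, hps β hβ⟩) _ hγΨ

lemma add_two_smul_mem (hcl : ∀ a ∈ Ψ', ∀ b ∈ Ψ', reflA a b ∈ Ψ')
    (hshort : affineShortRoots n Λs ⊆ Ψ') {i k : Fin n} (hik : i ≠ k) {μ : Y}
    (hμ : ((2 : ℝ) • ee n i, μ) ∈ Ψ') {x : Y} (hx : x ∈ Λs) :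
    ((2 : ℝ) • ee n i, μ + 2 • x) ∈ Ψ' := by
  set β := ee n i + (1 : ℝ) • ee n k
  have hβ : β ∈ pmEE n := ⟨i, k, hik, 1, 1, Or.inl rfl, Or.inl rfl, by rw [one_smul]⟩
  have hβ0 : (β, 0) ∈ Ψ' := hshort ⟨hβ, Λs.zero_mem⟩
  have hβx : (β, -x) ∈ Ψ' := hshort ⟨hβ, neg_mem hx⟩
  have := hcl _ hβ0 _ (hcl _ hβx _ hμ)
  rwa [reflA_reflA_of_fst_eq (inner_self_ne_zero_of_mem (Or.inl hβ)),
    cartan_two_ee_ee_add hik (Or.inl rfl), sub_zero, smul_neg, sub_neg_eq_add,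
    ofNat_smul_eq_nsmul ℝ 2 x] at this

lemma cGoodT_setOf_mem (hn : 2 ≤ n) (hlin : IsZLin (pmEE n ∪ pm2E n) p)
    (hps : ∀ α ∈ pmEE n, p α ∈ Λs) (hΨ'Φ : Ψ' ⊆ affineShortRoots n Λs ∪ affineLongRoots n Λℓ)
    (hcl : ∀ a ∈ Ψ', ∀ b ∈ Ψ', reflA a b ∈ Ψ') (hshort : affineShortRoots n Λs ⊆ Ψ')
    (hne : Ψ' ≠ affineShortRoots n Λs ∪ affineLongRoots n Λℓ) {α₀ : EuclideanSpace ℝ (Fin n)}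
    (hα₀ : α₀ ∈ pm2E n) (h0 : (α₀, p α₀) ∈ Ψ') :
    CGoodT n Λs Λℓ p {t | (α₀, p α₀ + t) ∈ Ψ'} := by
  set T : Set Y := {t | (α₀, p α₀ + t) ∈ Ψ'}
  have hmemT : ∀ α ∈ pm2E n, ∀ t, (α, p α + t) ∈ Ψ' ↔ t ∈ T := fun α hα t ↦
    ⟨mem_of_mem_of_mem_pm2E hn hlin hps hcl hshort hα hα₀,
      mem_of_mem_of_mem_pm2E hn hlin hps hcl hshort hα₀ hα⟩
  have hT2 : ∀ t ∈ T, ∀ x ∈ Λs, t + 2 • x ∈ T := fun t ht x hx ↦ by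
    have hα : (2 : ℝ) • ee n ⟨0, by omega⟩ ∈ pm2E n := ⟨_, Or.inl rfl⟩
    have := add_two_smul_mem hcl hshort (k := ⟨1, by omega⟩) (by simp) ((hmemT _ hα t).2 ht) hx
    rw [add_assoc] at this
    exact (hmemT _ hα _).1 this
  refine ⟨fun x hx ↦ by simpa using hT2 0 (by simpa [T] using h0) x hx, hT2,
    fun α hα t ht ↦ ?_, fun α₁ hα₁ hT ↦ hne (Set.Subset.antisymm hΨ'Φ ?_)⟩
  · rcases hΨ'Φ ((hmemT α hα t).2 ht) with ⟨hs, -⟩ | ⟨-, h⟩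
    · exact (Set.disjoint_left.mp pmEE_disjoint_pm2E hs hα).elim
    · exact h
  · rintro ⟨α, μ⟩ (hs | ⟨hα, hμ⟩)
    · exact hshort hs
    · rw [← hT] at hμ
      obtain ⟨t, ht, rfl⟩ := hμ
      obtain ⟨x, hx, hpx⟩ := exists_eq_add_two_smul hn hlin hps hα hα₁
      rw [hpx, add_assoc, add_comm (2 • x)]
      exact (hmemT α hα _).2 (hT2 t ht x hx)

lemma eq_of_affineShortRoots_union_liftedLongRoots_subset (hn : 2 ≤ n)
    (hlin : IsZLin (pmEE n ∪ pm2E n) p) (hps : ∀ α ∈ pmEE n, p α ∈ Λs)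
    (hS : CGoodT n Λs Λℓ p S) (hSmax : ∀ T : Set Y, CGoodT n Λs Λℓ p T → S ⊆ T → T = S)
    (hΨ' : IsRootSubsystem reflA (affineShortRoots n Λs ∪ affineLongRoots n Λℓ) Ψ')
    (hsub : affineShortRoots n Λs ∪ liftedLongRoots n p S ⊆ Ψ')
    (hne : Ψ' ≠ affineShortRoots n Λs ∪ affineLongRoots n Λℓ) :
    Ψ' = affineShortRoots n Λs ∪ liftedLongRoots n p S := by
  obtain ⟨-, hΨ'Φ, hcl⟩ := hΨ'
  have hshort : affineShortRoots n Λs ⊆ Ψ' := fun x hx ↦ hsub (Or.inl hx)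
  obtain ⟨α₀, hα₀⟩ : ∃ α₀, α₀ ∈ pm2E n := ⟨_, ⟨⟨0, by omega⟩, Or.inl rfl⟩⟩
  have hlift : ∀ s ∈ S, (α₀, p α₀ + s) ∈ Ψ' := fun s hs ↦ hsub (Or.inr ⟨_, hα₀, s, hs, rfl⟩)
  have hTS := hSmax _ (cGoodT_setOf_mem hn hlin hps hΨ'Φ hcl hshort hne hα₀
    (by simpa using hlift 0 hS.zero_mem)) hlift
  refine Set.Subset.antisymm (fun ⟨α, μ⟩ hx ↦ ?_) hsub
  rcases hΨ'Φ hx with hs | ⟨hα, -⟩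
  · exact Or.inl hs
  · refine Or.inr ⟨α, hα, μ - p α, hTS ▸ mem_of_mem_of_mem_pm2E hn hlin hps hcl hshort hα hα₀ ?_,
      by rw [add_sub_cancel]⟩
    rwa [add_sub_cancel]

end AffineRoots

theorem stmt_4_general (n : ℕ) (hn : 3 ≤ n) (Y : Type*) [AddCommGroup Y] [Module ℝ Y]
    (Λs : AddSubgroup Y)
    (Λℓ : Set Y) (hℓs : Λℓ ⊆ (Λs : Set Y))
    (Φ : Set (EuclideanSpace ℝ (Fin n) × Y))
    (hΦ : Φ = {x | x.1 ∈ pmEE n ∧ x.2 ∈ Λs} ∪ {x | x.1 ∈ pm2E n ∧ x.2 ∈ Λℓ})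
    (p : EuclideanSpace ℝ (Fin n) → Y)
    (hlin : IsZLin (pmEE n ∪ pm2E n) p)
    (hps : ∀ α ∈ pmEE n, p α ∈ Λs)
    (S : Set Y) (hS : CGoodT n Λs Λℓ p S)
    (hSmax : ∀ T : Set Y, CGoodT n Λs Λℓ p T → S ⊆ T → T = S)
    (Ψ : Set (EuclideanSpace ℝ (Fin n) × Y))
    (hΨ : Ψ = {x | x.1 ∈ pmEE n ∧ x.2 ∈ Λs} ∪
      {x | ∃ α ∈ pm2E n, ∃ s ∈ S, x = (α, p α + s)}) :
    IsMaximalRootSubsystem reflA Φ Ψ := by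
  subst hΦ hΨ
  exact ⟨isRootSubsystem_affineShortRoots_union_liftedLongRoots (by omega) hℓs hlin hps hS,
    affineShortRoots_union_liftedLongRoots_ne (by omega) hS,
    fun _ hΨ' hsub hne ↦
      eq_of_affineShortRoots_union_liftedLongRoots_subset (by omega) hlin hps hS hSmax hΨ' hsub hne⟩

/-- gradient `C_n`, `n ≥ 3`: if `Λ_ℓ ≠ 2Λ_s`, `p` is ℤ-linear with
`p(α) ∈ Λ_s` for short `α`, and `S` is maximal among the subsets described by `CGoodT`,
then `Ψ = (Φ̊_s ⊕ Λ_s) ∪ {(α, p(α)+s) : α long, s ∈ S}` is a maximal root subsystem. -/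
theorem stmt_4 (n : ℕ) (hn : 3 ≤ n) (Y : Type*) [AddCommGroup Y] [Module ℝ Y]
    [FiniteDimensional ℝ Y]
    (Λs : AddSubgroup Y) (hspan : Submodule.span ℝ (Λs : Set Y) = ⊤)
    (Λℓ : Set Y) (h0ℓ : (0 : Y) ∈ Λℓ) (hℓs : Λℓ ⊆ (Λs : Set Y))
    (hℓneg : ∀ x ∈ Λℓ, -x ∈ Λℓ)
    (hℓ2 : ∀ x ∈ Λℓ, ∀ y ∈ Λs, x + 2 • y ∈ Λℓ)
    (Φ : Set (EuclideanSpace ℝ (Fin n) × Y))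
    (hΦ : Φ = {x | x.1 ∈ pmEE n ∧ x.2 ∈ Λs} ∪ {x | x.1 ∈ pm2E n ∧ x.2 ∈ Λℓ})
    (hne : Λℓ ≠ {y | ∃ x ∈ Λs, y = 2 • x})
    (p : EuclideanSpace ℝ (Fin n) → Y)
    (hlin : IsZLin (pmEE n ∪ pm2E n) p)
    (hps : ∀ α ∈ pmEE n, p α ∈ Λs)
    (S : Set Y) (hS : CGoodT n Λs Λℓ p S)
    (hSmax : ∀ T : Set Y, CGoodT n Λs Λℓ p T → S ⊆ T → T = S)
    (Ψ : Set (EuclideanSpace ℝ (Fin n) × Y))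
    (hΨ : Ψ = {x | x.1 ∈ pmEE n ∧ x.2 ∈ Λs} ∪
      {x | ∃ α ∈ pm2E n, ∃ s ∈ S, x = (α, p α + s)}) :
    IsMaximalRootSubsystem reflA Φ Ψ :=
  stmt_4_general n hn Y Λs Λℓ hℓs Φ hΦ p hlin hps S hS hSmax Ψ hΨ
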